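/- For ξ ∈ 𝓕̄, x ≥ 0, y > 0 and ε > 0, let M(ξ; x; y; ε) be the number of matrices γ ∈ SL₂(ℤ) for which there exists τ ∈ ℍ with Im(τ) = y, |Re(τ)| ≤ x, γτ ∈ 𝓕̄ and |γτ − ξ| ≤ ε. If 0 < ε ≤ (Im(ξ)/(100|ξ|³))², then M(ξ; x; y; ε) ≤ 2·(16π·(√(2·Im(ξ)) + √y)/√y + 100π·|ξ|³·ε^{1/2}/(y·Im(ξ)))·(4x + 13|ξ|). -/

import Mathlib

open Real

/-- The closed standard fundamental domain
`{τ ∈ ℍ : |Re τ| ≤ 1/2, |τ| ≥ 1}` viewed inside `ℂ`. -/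
def inFD (z : ℂ) : Prop :=
  0 < z.im ∧ |z.re| ≤ 1 / 2 ∧ 1 ≤ ‖z‖

/-- The fractional linear (Möbius) action of an integer matrix `[[a,b],[c,d]]` on `ℂ`. -/
noncomputable def moebius (a b c d : ℤ) (τ : ℂ) : ℂ :=
  ((a : ℂ) * τ + (b : ℂ)) / ((c : ℂ) * τ + (d : ℂ))

/-
For `γ = [[a, b], [c, d]]` and `p = γτ` one has `(a - c p)(cτ + d) = 1`, hence
`|a - c p|² · Im τ = Im p`. As `p` lies within `ε` of `ξ` and `Im τ = y`, this confines `c` to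
`|c| ≤ 2/√y` and, for each `c`, confines `a` to two intervals of radius `|c| ε + √(2ε/y)` around
`c Re ξ ± √(Im ξ / y - c² (Im ξ)²)`. Two matrices with the same first column differ by a
translation, `γ' = γ Tᵗ`, and `|γz - γw|² Im z Im w = |z - w|² Im γz Im γw` forces
`|τ' + t - τ| ≤ 1/2`, so `|t| ≤ 2x + 1/2`. The count is the product of the two bounds.
-/

theorem Real.abs_sqrt_sub_sqrt_le (A B : ℝ) : |√A - √B| ≤ √|A - B| := by
  wlog h : B ≤ A generalizing A B
  · rw [abs_sub_comm, abs_sub_comm A B]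
    exact this B A (le_of_not_ge h)
  rw [abs_of_nonneg (sub_nonneg.2 (sqrt_le_sqrt h)), abs_of_nonneg (sub_nonneg.2 h),
    sub_le_iff_le_add, sqrt_le_iff]
  have hB : B ≤ √B ^ 2 := by
    rcases le_total 0 B with hB | hB
    · rw [sq_sqrt hB]
    · rw [sqrt_eq_zero_of_nonpos hB]; simpa using hB
  refine ⟨by positivity, ?_⟩
  nlinarith [sq_sqrt (sub_nonneg.2 h), mul_nonneg (sqrt_nonneg (A - B)) (sqrt_nonneg B)]

theorem Set.finite_and_ncard_le_of_fibers {α β : Type*} [DecidableEq α] {S : Set α}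
    {f : α → β} {U : Finset β} {n : ℕ} (hf : Set.MapsTo f S U)
    (hfib : ∀ u, ∃ F : Finset α, F.card ≤ n ∧ ∀ x ∈ S, f x = u → x ∈ F) :
    S.Finite ∧ S.ncard ≤ U.card * n := by
  choose F hFn hF using hfib
  have hsub : S ⊆ U.biUnion F := fun x hx ↦ Finset.mem_biUnion.2 ⟨f x, hf hx, hF _ x hx rfl⟩
  refine ⟨(U.biUnion F).finite_toSet.subset hsub, ?_⟩
  calc S.ncard ≤ (U.biUnion F).card := by
        rw [← Set.ncard_coe_finset]; exact Set.ncard_le_ncard hsub (Finset.finite_toSet _)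
    _ ≤ U.card * n := Finset.card_biUnion_le_card_mul _ _ _ fun u _ ↦ hFn u

theorem Finset.cast_card_biUnion_le_card_mul {ι β : Type*} [DecidableEq β] {s : Finset ι}
    {f : ι → Finset β} {B : ℝ} (h : ∀ i ∈ s, ((f i).card : ℝ) ≤ B) :
    ((s.biUnion f).card : ℝ) ≤ s.card * B := by
  calc ((s.biUnion f).card : ℝ) ≤ ∑ i ∈ s, ((f i).card : ℝ) := by
        exact_mod_cast Finset.card_biUnion_le
    _ ≤ s.card * B := by simpa using Finset.sum_le_card_nsmul s _ B h

noncomputable def intsNear (u r : ℝ) : Finset ℤ :=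
  Finset.Icc ⌈u - r⌉ ⌊u + r⌋

theorem mem_intsNear {u r : ℝ} {a : ℤ} : a ∈ intsNear u r ↔ |(a : ℝ) - u| ≤ r := by
  rw [intsNear, Finset.mem_Icc, Int.ceil_le, Int.le_floor, abs_le]
  constructor <;> rintro ⟨h₁, h₂⟩ <;> constructor <;> linarith

theorem card_intsNear_le (u : ℝ) {r : ℝ} (hr : 0 ≤ r) :
    ((intsNear u r).card : ℝ) ≤ 2 * r + 1 := by
  rw [intsNear, Int.card_Icc, ← Int.cast_natCast, Int.toNat_eq_max, Int.cast_max]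
  refine max_le ?_ (by simp; linarith)
  push_cast
  linarith [Int.floor_le (u + r), Int.le_ceil (u - r)]

theorem mem_intsNear_union_of_abs_abs_sub_le {u g w : ℝ} {a : ℤ}
    (h : |(|(a : ℝ) - u| - g)| ≤ w) : a ∈ intsNear (u + g) w ∪ intsNear (u - g) w := by
  rw [Finset.mem_union, mem_intsNear, mem_intsNear]
  rcases le_total 0 ((a : ℝ) - u) with ha | ha
  · left; rwa [abs_of_nonneg ha, sub_sub] at h
  · right; rw [abs_of_nonpos ha] at h; rw [← abs_neg]; convert h using 2; ring

theorem card_intsNear_union_le (u g : ℝ) {w : ℝ} (hw : 0 ≤ w) :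
    ((intsNear (u + g) w ∪ intsNear (u - g) w).card : ℝ) ≤ 2 * (2 * w + 1) := by
  calc ((intsNear (u + g) w ∪ intsNear (u - g) w).card : ℝ)
      ≤ (intsNear (u + g) w).card + (intsNear (u - g) w).card := by
        exact_mod_cast Finset.card_union_le _ _
    _ ≤ 2 * (2 * w + 1) := by linarith [card_intsNear_le (u + g) hw, card_intsNear_le (u - g) hw]

section Moebius

variable {a b c d : ℤ}

theorem exists_translate_of_det_eq_one {b' d' : ℤ} (h : a * d - b * c = 1)
    (h' : a * d' - b' * c = 1) : ∃ t : ℤ, b' = b + t * a ∧ d' = d + t * c :=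
  ⟨d * (b' - b) - b * (d' - d), by linear_combination (b - b') * h + b * h' - b * h,
    by linear_combination (d - d') * h + d * h' - d * h⟩

theorem moebius_translate (t : ℤ) (τ : ℂ) :
    moebius a (b + t * a) c (d + t * c) τ = moebius a b c d (τ + t) := by
  simp only [moebius]; push_cast; ring_nf

theorem moebius_denom_ne_zero (hdet : a * d - b * c = 1) {τ : ℂ} (hτ : τ.im ≠ 0) :
    (c : ℂ) * τ + d ≠ 0 := by
  intro h
  have hc : c = 0 := by
    have : (c : ℝ) * τ.im = 0 := by simpa using congrArg Complex.im h
    exact_mod_cast (mul_eq_zero.1 this).resolve_right hτ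
  have hd : d = 0 := by simpa [hc] using h
  simp [hc, hd] at hdet

theorem sub_mul_moebius_mul_denom (hdet : a * d - b * c = 1) {τ : ℂ} (hτ : τ.im ≠ 0) :
    ((a : ℂ) - c * moebius a b c d τ) * (c * τ + d) = 1 := by
  have hdetC : (a : ℂ) * d - b * c = 1 := by exact_mod_cast hdet
  rw [moebius, sub_mul, mul_assoc, div_mul_cancel₀ _ (moebius_denom_ne_zero hdet hτ)]
  linear_combination hdetC

theorem normSq_intCast_sub_intCast_mul (a c : ℤ) (p : ℂ) :
    Complex.normSq ((a : ℂ) - c * p) = ((a : ℝ) - c * p.re) ^ 2 + ((c : ℝ) * p.im) ^ 2 := by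
  simp only [Complex.normSq_apply, Complex.sub_re, Complex.sub_im, Complex.mul_re, Complex.mul_im,
    Complex.intCast_re, Complex.intCast_im]
  ring

theorem normSq_sub_mul_moebius_mul_im (hdet : a * d - b * c = 1) {τ : ℂ} (hτ : τ.im ≠ 0) :
    Complex.normSq ((a : ℂ) - c * moebius a b c d τ) * τ.im = (moebius a b c d τ).im := by
  have hD := moebius_denom_ne_zero hdet hτ
  have hdetR : (a : ℝ) * d - b * c = 1 := by exact_mod_cast hdet
  have hnorm :
      Complex.normSq ((a : ℂ) - c * moebius a b c d τ) = (Complex.normSq (c * τ + d))⁻¹ := by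
    refine eq_inv_of_mul_eq_one_left ?_
    rw [← map_mul, sub_mul_moebius_mul_denom hdet hτ, map_one]
  rw [hnorm, moebius, Complex.div_im, ← sub_div, inv_mul_eq_div]
  congr 1
  simp only [Complex.add_re, Complex.add_im, Complex.mul_re, Complex.mul_im, Complex.intCast_re,
    Complex.intCast_im]
  linear_combination (-τ.im) * hdetR

theorem moebius_sub_moebius (hdet : a * d - b * c = 1) {z w : ℂ} (hz : z.im ≠ 0)
    (hw : w.im ≠ 0) :
    moebius a b c d z - moebius a b c d w =
      (z - w) * (((a : ℂ) - c * moebius a b c d z) * ((a : ℂ) - c * moebius a b c d w)) := by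
  have hdetC : (a : ℂ) * d - b * c = 1 := by exact_mod_cast hdet
  rw [eq_inv_of_mul_eq_one_left (sub_mul_moebius_mul_denom hdet hz),
    eq_inv_of_mul_eq_one_left (sub_mul_moebius_mul_denom hdet hw), moebius, moebius,
    div_sub_div _ _ (moebius_denom_ne_zero hdet hz) (moebius_denom_ne_zero hdet hw), ← mul_inv,
    ← div_eq_mul_inv]
  congr 1
  linear_combination (z - w) * hdetC

theorem norm_moebius_sub_moebius_sq_mul (hdet : a * d - b * c = 1) {z w : ℂ} (hz : z.im ≠ 0)
    (hw : w.im ≠ 0) :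
    ‖moebius a b c d z - moebius a b c d w‖ ^ 2 * (z.im * w.im) =
      ‖z - w‖ ^ 2 * ((moebius a b c d z).im * (moebius a b c d w).im) := by
  rw [← normSq_sub_mul_moebius_mul_im hdet hz, ← normSq_sub_mul_moebius_mul_im hdet hw,
    moebius_sub_moebius hdet hz hw]
  simp only [← Complex.normSq_eq_norm_sq, map_mul]
  ring

theorem im_le_max_im_moebius (hdet : a * d - b * c = 1) {τ : ℂ} (hτ : 0 < τ.im) :
    τ.im ≤ max (moebius a b c d τ).im (moebius a b c d τ).im⁻¹ := by
  set p := moebius a b c d τ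
  have h := normSq_sub_mul_moebius_mul_im hdet hτ.ne'
  rw [normSq_intCast_sub_intCast_mul] at h
  have hp : 0 < p.im := by
    rw [← normSq_sub_mul_moebius_mul_im hdet hτ.ne']
    exact mul_pos (Complex.normSq_pos.2
      (left_ne_zero_of_mul_eq_one (sub_mul_moebius_mul_denom hdet hτ.ne'))) hτ
  rcases eq_or_ne c 0 with rfl | hc
  · have ha : (1 : ℝ) ≤ (a : ℝ) ^ 2 := by
      have : a ≠ 0 := by rintro rfl; simp at hdet
      rw [one_le_sq_iff_one_le_abs]; exact_mod_cast Int.one_le_abs this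
    refine le_max_of_le_left ?_
    simp only [Int.cast_zero, zero_mul, sub_zero] at h
    nlinarith
  · have hc : (1 : ℝ) ≤ (c : ℝ) ^ 2 := by
      rw [one_le_sq_iff_one_le_abs]; exact_mod_cast Int.one_le_abs hc
    refine le_max_of_le_right ?_
    rw [← one_div, le_div_iff₀ hp]
    nlinarith [sq_nonneg ((a : ℝ) - c * p.re), mul_le_mul_of_nonneg_right hc (sq_nonneg p.im)]

end Moebius

theorem inFD.four_fifths_le_im {z : ℂ} (hz : inFD z) : 4 / 5 ≤ z.im := by
  obtain ⟨him, hre, hnorm⟩ := hz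
  have h : 1 ≤ z.re * z.re + z.im * z.im := by
    rw [← Complex.normSq_apply, ← Complex.sq_norm]; nlinarith
  nlinarith [abs_le.1 hre]

theorem inFD.im_div_le {z : ℂ} (hz : inFD z) : z.im / (100 * ‖z‖ ^ 3) ≤ 1 / 100 := by
  have h1 : 1 ≤ ‖z‖ := hz.2.2
  rw [div_le_div_iff₀ (by positivity) (by norm_num)]
  nlinarith [Complex.im_le_norm z, one_le_pow₀ (n := 2) h1,
    mul_le_mul_of_nonneg_left (one_le_pow₀ (n := 2) h1) (norm_nonneg z)]

theorem abs_le_two_div_sqrt_of_sq_add_sq_mul_eq {a c r u y : ℝ} (hy : 0 < y) (hu : 3 / 4 ≤ u)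
    (h : ((a - c * r) ^ 2 + (c * u) ^ 2) * y = u) : |c| ≤ 2 / √y := by
  have hcu : c ^ 2 * y * u ≤ 1 := by nlinarith [sq_nonneg (a - c * r), sq_nonneg c]
  have hcy : c ^ 2 * y ≤ 2 ^ 2 := by nlinarith [mul_nonneg (sq_nonneg c) hy.le]
  rw [le_div_iff₀ (sqrt_pos.2 hy), ← sqrt_sq_eq_abs, ← sqrt_mul (sq_nonneg c)]
  exact sqrt_le_left (by norm_num) |>.2 hcy

theorem abs_abs_sub_sqrt_le_of_sq_add_sq_mul_eq {a c r u ρ m y ε : ℝ} (hy : 0 < y) (hm : 0 < m)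
    (hεm : 2 * ε ≤ m) (hu : |u - m| ≤ ε) (hr : |r - ρ| ≤ ε)
    (h : ((a - c * r) ^ 2 + (c * u) ^ 2) * y = u) :
    |(|a - c * ρ| - √(m / y - c ^ 2 * m ^ 2))| ≤ |c| * ε + √(2 * ε / y) := by
  obtain ⟨hu₁, hu₂⟩ := abs_le.1 hu
  have hε : 0 ≤ ε := (abs_nonneg _).trans hu
  have hu₀ : 0 < u := by linarith
  have hcu : c ^ 2 * y * u ≤ 1 := by nlinarith [sq_nonneg (a - c * r), sq_nonneg c]
  have hcm : c ^ 2 * y * m ≤ 2 := by nlinarith [sq_nonneg c]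
  have hdiff : ((a - c * r) ^ 2 - (m / y - c ^ 2 * m ^ 2)) * y =
      (u - m) * (1 - c ^ 2 * y * (u + m)) := by
    field_simp
    linear_combination h
  have hfac : |1 - c ^ 2 * y * (u + m)| ≤ 2 := by
    rw [abs_le]; constructor <;> nlinarith [sq_nonneg c]
  have hsq : |(a - c * r) ^ 2 - (m / y - c ^ 2 * m ^ 2)| ≤ 2 * ε / y := by
    rw [le_div_iff₀ hy]
    calc |(a - c * r) ^ 2 - (m / y - c ^ 2 * m ^ 2)| * y
        = |u - m| * |1 - c ^ 2 * y * (u + m)| := by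
          rw [← abs_mul, ← hdiff, abs_mul, abs_of_pos hy]
      _ ≤ ε * 2 := mul_le_mul hu hfac (abs_nonneg _) hε
      _ = 2 * ε := mul_comm _ _
  have hnear : |(|a - c * r| - √(m / y - c ^ 2 * m ^ 2))| ≤ √(2 * ε / y) := by
    rw [← sqrt_sq_eq_abs (a - c * r)]
    exact (abs_sqrt_sub_sqrt_le _ _).trans (sqrt_le_sqrt hsq)
  have hshift : |(|a - c * ρ| - |a - c * r|)| ≤ |c| * ε := by
    refine (abs_abs_sub_abs_le_abs_sub _ _).trans ?_
    rw [show a - c * ρ - (a - c * r) = c * (r - ρ) by ring, abs_mul]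
    exact mul_le_mul_of_nonneg_left hr (abs_nonneg c)
  exact (abs_sub_le _ _ _).trans (add_le_add hshift hnear)

-- A negative radicand gives `√ = 0`; harmless, as `Real.abs_sqrt_sub_sqrt_le` holds on all of `ℝ`.
noncomputable def nearColumns (ξ : ℂ) (y ε : ℝ) : Finset (ℤ × ℤ) :=
  (intsNear 0 (2 / √y)).biUnion fun c ↦
    (intsNear (c * ξ.re + √(ξ.im / y - c ^ 2 * ξ.im ^ 2)) (2 / √y * ε + √(2 * ε / y)) ∪
      intsNear (c * ξ.re - √(ξ.im / y - c ^ 2 * ξ.im ^ 2)) (2 / √y * ε + √(2 * ε / y))).image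
        (·, c)

theorem card_nearColumns_le (ξ : ℂ) {y ε : ℝ} (hy : 0 < y) (hε : 0 ≤ ε) :
    ((nearColumns ξ y ε).card : ℝ) ≤
      (2 * (2 / √y) + 1) * (2 * (2 * (2 / √y * ε + √(2 * ε / y)) + 1)) := by
  calc ((nearColumns ξ y ε).card : ℝ)
      ≤ (intsNear 0 (2 / √y)).card * (2 * (2 * (2 / √y * ε + √(2 * ε / y)) + 1)) :=
        Finset.cast_card_biUnion_le_card_mul fun c _ ↦
          (Nat.cast_le.2 Finset.card_image_le).trans (card_intsNear_union_le _ _ (by positivity))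
    _ ≤ _ := by
        gcongr
        exact card_intsNear_le 0 (by positivity)

def translatingMatrices (ξ : ℂ) (x y ε : ℝ) : Set (ℤ × ℤ × ℤ × ℤ) :=
  {q : ℤ × ℤ × ℤ × ℤ |
      q.1 * q.2.2.2 - q.2.1 * q.2.2.1 = 1 ∧
      ∃ τ : ℂ, τ.im = y ∧ |τ.re| ≤ x ∧
        inFD (moebius q.1 q.2.1 q.2.2.1 q.2.2.2 τ) ∧
        ‖moebius q.1 q.2.1 q.2.2.1 q.2.2.2 τ - ξ‖ ≤ ε}

section TranslatingMatrices

variable {ξ : ℂ} {x y ε : ℝ}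

theorem firstColumn_mem_nearColumns (hy : 0 < y) (hm : 4 / 5 ≤ ξ.im) (hε : ε ≤ 1 / 10000)
    {q : ℤ × ℤ × ℤ × ℤ} (hq : q ∈ translatingMatrices ξ x y ε) :
    (q.1, q.2.2.1) ∈ nearColumns ξ y ε := by
  obtain ⟨a, b, c, d⟩ := q
  obtain ⟨hdet, τ, rfl, -, -, hclose⟩ := hq
  set p := moebius a b c d τ
  have h := normSq_sub_mul_moebius_mul_im hdet hy.ne'
  rw [normSq_intCast_sub_intCast_mul] at h
  have hu : |p.im - ξ.im| ≤ ε := by simpa using (Complex.abs_im_le_norm (p - ξ)).trans hclose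
  have hr : |p.re - ξ.re| ≤ ε := by simpa using (Complex.abs_re_le_norm (p - ξ)).trans hclose
  have hε₀ : 0 ≤ ε := (abs_nonneg _).trans hu
  have hc := abs_le_two_div_sqrt_of_sq_add_sq_mul_eq hy (by linarith [(abs_le.1 hu).1]) h
  have ha := abs_abs_sub_sqrt_le_of_sq_add_sq_mul_eq hy (by linarith) (by linarith) hu hr h
  refine Finset.mem_biUnion.2 ⟨c, mem_intsNear.2 (by simpa using hc), Finset.mem_image_of_mem _
    (mem_intsNear_union_of_abs_abs_sub_le (ha.trans ?_))⟩
  gcongr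

theorem norm_sub_le_half_of_norm_moebius_sub_le {a b c d : ℤ} (hdet : a * d - b * c = 1)
    (hy : 0 < y) (hm : 4 / 5 ≤ ξ.im) (hε : ε ≤ 1 / 10000) {z w : ℂ} (hz : z.im = y)
    (hw : w.im = y) (hzξ : ‖moebius a b c d z - ξ‖ ≤ ε) (hwξ : ‖moebius a b c d w - ξ‖ ≤ ε) :
    ‖z - w‖ ≤ 1 / 2 := by
  set p := moebius a b c d z
  set q := moebius a b c d w
  have hε₀ : 0 ≤ ε := (norm_nonneg _).trans hzξ
  have hp := abs_le.1 <| by simpa using (Complex.abs_im_le_norm (p - ξ)).trans hzξ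
  have hq := abs_le.1 <| by simpa using (Complex.abs_im_le_norm (q - ξ)).trans hwξ
  have hpq : ‖p - q‖ ≤ 2 * ε := by
    linarith [norm_sub_le_norm_sub_add_norm_sub p ξ q, norm_sub_rev q ξ]
  have hid := norm_moebius_sub_moebius_sq_mul hdet (hz ▸ hy.ne') (hw ▸ hy.ne')
  rw [hz, hw] at hid
  have hyε : 4 * ε * y ≤ ξ.im - ε := by
    rcases le_max_iff.1 (hz ▸ im_le_max_im_moebius hdet (hz ▸ hy)) with h | h
    · nlinarith
    · have : y * p.im ≤ 1 := by rwa [← le_div_iff₀ (by linarith), one_div]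
      nlinarith
  have hm' : 0 < ξ.im - ε := by linarith
  have hsq : (‖z - w‖ * (ξ.im - ε)) ^ 2 ≤ ((ξ.im - ε) / 2) ^ 2 := by
    calc (‖z - w‖ * (ξ.im - ε)) ^ 2 ≤ ‖z - w‖ ^ 2 * (p.im * q.im) := by
          rw [mul_pow]; gcongr; nlinarith
      _ = ‖p - q‖ ^ 2 * y ^ 2 := by rw [← hid]; ring
      _ ≤ (2 * ε) ^ 2 * y ^ 2 := by gcongr
      _ = (2 * ε * y) ^ 2 := by ring
      _ ≤ ((ξ.im - ε) / 2) ^ 2 := by gcongr; linarith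
  have := pow_le_pow_iff_left₀ (by positivity) (by positivity) two_ne_zero |>.1 hsq
  nlinarith

theorem exists_translate_mem_intsNear (hy : 0 < y) (hm : 4 / 5 ≤ ξ.im) (hε : ε ≤ 1 / 10000)
    {a b c d b' d' : ℤ} (hq : (a, b, c, d) ∈ translatingMatrices ξ x y ε)
    (hq' : (a, b', c, d') ∈ translatingMatrices ξ x y ε) :
    ∃ t ∈ intsNear 0 (2 * x + 1 / 2), b' = b + t * a ∧ d' = d + t * c := by
  obtain ⟨hdet, τ, hτ, hτx, -, hclose⟩ := hq
  obtain ⟨hdet', τ', hτ', hτx', -, hclose'⟩ := hq'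
  dsimp only at hdet hdet' hclose hclose'
  obtain ⟨t, rfl, rfl⟩ := exists_translate_of_det_eq_one hdet hdet'
  refine ⟨t, ?_, rfl, rfl⟩
  rw [moebius_translate] at hclose'
  have hdist := norm_sub_le_half_of_norm_moebius_sub_le hdet hy hm hε
    (by simpa using hτ') hτ hclose' hclose
  have hre : |(t : ℝ) + τ'.re - τ.re| ≤ 1 / 2 := by
    simpa [add_sub_right_comm, add_comm] using (Complex.abs_re_le_norm _).trans hdist
  rw [mem_intsNear, sub_zero]
  rw [abs_le] at hτx hτx' hre ⊢
  constructor <;> linarith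

theorem exists_finset_fiber_firstColumn (hy : 0 < y) (hm : 4 / 5 ≤ ξ.im) (hε : ε ≤ 1 / 10000)
    (u : ℤ × ℤ) :
    ∃ F : Finset (ℤ × ℤ × ℤ × ℤ), F.card ≤ (intsNear 0 (2 * x + 1 / 2)).card ∧
      ∀ q ∈ translatingMatrices ξ x y ε, (q.1, q.2.2.1) = u → q ∈ F := by
  by_cases hu : ∃ q ∈ translatingMatrices ξ x y ε, (q.1, q.2.2.1) = u
  · obtain ⟨⟨a, b, c, d⟩, hq, rfl⟩ := hu
    refine ⟨(intsNear 0 (2 * x + 1 / 2)).image fun t ↦ (a, b + t * a, c, d + t * c),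
      Finset.card_image_le, ?_⟩
    rintro ⟨a', b', c', d'⟩ hq' hcol
    simp only [Prod.mk.injEq] at hcol
    obtain ⟨rfl, rfl⟩ := hcol
    obtain ⟨t, ht, rfl, rfl⟩ := exists_translate_mem_intsNear hy hm hε hq hq'
    exact Finset.mem_image_of_mem _ ht
  · exact ⟨∅, by simp, fun q hq hcol ↦ (hu ⟨q, hq, hcol⟩).elim⟩

end TranslatingMatrices

theorem card_nearColumns_bound_le {y ε m A : ℝ} (hy : 0 < y) (hε₀ : 0 ≤ ε) (hε : ε ≤ 1 / 10000)
    (hm : 4 / 5 ≤ m) (hmA : m ≤ A) (hA : 1 ≤ A) :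
    (2 * (2 / √y) + 1) * (2 * (2 * (2 / √y * ε + √(2 * ε / y)) + 1)) ≤
      2 * (16 * π * (√(2 * m) + √y) / √y + 100 * π * A ^ 3 * √ε / (y * m)) := by
  have hs : 0 < √y := sqrt_pos.2 hy
  set v := (√y)⁻¹ with hv
  have hv0 : 0 < v := inv_pos.2 hs
  set r := √ε with hr
  have hr0 : 0 ≤ r := sqrt_nonneg ε
  have hr1 : r ≤ 1 / 100 := by
    rw [hr, sqrt_le_left (by norm_num)]; linarith
  have hε_eq : ε = r ^ 2 := (sq_sqrt hε₀).symm
  have h2 : √2 ≤ 3 / 2 := by rw [sqrt_le_left (by norm_num)]; norm_num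
  have h2m : 5 / 4 ≤ √(2 * m) := by rw [le_sqrt (by norm_num) (by linarith)]; linarith
  have hAm : 1 ≤ A ^ 3 / m := by
    rw [le_div_iff₀ (by linarith)]
    nlinarith [mul_le_mul_of_nonneg_left (one_le_pow₀ (n := 2) hA) (by linarith : (0 : ℝ) ≤ A)]
  have e1 : 2 / √y = 2 * v := by rw [hv, div_eq_mul_inv]
  have e2 : √(2 * ε / y) = √2 * r * v := by
    rw [sqrt_div' _ hy.le, sqrt_mul (by norm_num), hv, div_eq_mul_inv]
  have e3 : 16 * π * (√(2 * m) + √y) / √y = 16 * π * √(2 * m) * v + 16 * π := by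
    rw [hv]; field_simp
  have e4 : 100 * π * A ^ 3 * √ε / (y * m) = 100 * π * (A ^ 3 / m) * r * v ^ 2 := by
    rw [hv, hr, inv_pow, sq_sqrt hy.le]; field_simp
  rw [e1, e2, e3, e4, hε_eq]
  have hπ := pi_gt_three
  calc (2 * (2 * v) + 1) * (2 * (2 * (2 * v * r ^ 2 + √2 * r * v) + 1))
      ≤ (4 * v + 1) * (7 * r * v + 2) := by
        have : 2 * v * r ^ 2 + √2 * r * v ≤ 7 / 4 * r * v := by
          have := mul_le_mul_of_nonneg_left hr1 (mul_nonneg hv0.le hr0)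
          have := mul_le_mul_of_nonneg_right h2 (mul_nonneg hr0 hv0.le)
          nlinarith
        nlinarith
    _ ≤ 2 * (60 * v + 48 + 300 * r * v ^ 2) := by nlinarith [mul_nonneg hr0 hv0.le]
    _ ≤ 2 * (16 * π * √(2 * m) * v + 16 * π + 100 * π * (A ^ 3 / m) * r * v ^ 2) := by
        have h1 : 60 ≤ 16 * π * √(2 * m) := by nlinarith
        have h2 : 300 ≤ 100 * π * (A ^ 3 / m) := by nlinarith
        nlinarith [mul_le_mul_of_nonneg_right h1 hv0.le,
          mul_le_mul_of_nonneg_right h2 (mul_nonneg hr0 (sq_nonneg v))]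

/-- Bound for the number `M(ξ; x; y; ε)` of matrices `γ ∈ SL₂(ℤ)` (recorded as
quadruples `(a,b,c,d)` of integers with `ad - bc = 1`) for which there exists
`τ ∈ ℍ` with `Im τ = y`, `|Re τ| ≤ x`, `γτ ∈ 𝓕̄` and `|γτ − ξ| ≤ ε`. -/
theorem count_translating_matrices
    (ξ : ℂ) (hξ : inFD ξ) (x y ε : ℝ) (hx : 0 ≤ x) (hy : 0 < y)
    (hε : 0 < ε) (hε' : ε ≤ (ξ.im / (100 * (‖ξ‖) ^ 3)) ^ 2)
    (S : Set (ℤ × ℤ × ℤ × ℤ))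
    (hS : S = {q : ℤ × ℤ × ℤ × ℤ |
      q.1 * q.2.2.2 - q.2.1 * q.2.2.1 = 1 ∧
      ∃ τ : ℂ, τ.im = y ∧ |τ.re| ≤ x ∧
        inFD (moebius q.1 q.2.1 q.2.2.1 q.2.2.2 τ) ∧
        ‖moebius q.1 q.2.1 q.2.2.1 q.2.2.2 τ - ξ‖ ≤ ε}) :
    S.Finite ∧
    (S.ncard : ℝ) ≤
      2 * (16 * π * (Real.sqrt (2 * ξ.im) + Real.sqrt y) / Real.sqrt y
          + 100 * π * (‖ξ‖) ^ 3 * Real.sqrt ε / (y * ξ.im))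
        * (4 * x + 13 * ‖ξ‖) := by
  rw [show S = translatingMatrices ξ x y ε from hS]
  have hm := hξ.four_fifths_le_im
  have hε₁ : ε ≤ 1 / 10000 :=
    hε'.trans <| (pow_le_pow_left₀ (div_nonneg hξ.1.le (by positivity)) hξ.im_div_le 2).trans
      (by norm_num)
  obtain ⟨hfin, hcard⟩ := Set.finite_and_ncard_le_of_fibers
    (fun q hq ↦ firstColumn_mem_nearColumns hy hm hε₁ hq)
    (exists_finset_fiber_firstColumn hy hm hε₁)
  refine ⟨hfin, ?_⟩
  calc ((translatingMatrices ξ x y ε).ncard : ℝ)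
      ≤ (nearColumns ξ y ε).card * (intsNear 0 (2 * x + 1 / 2)).card := by exact_mod_cast hcard
    _ ≤ (2 * (2 / √y) + 1) * (2 * (2 * (2 / √y * ε + √(2 * ε / y)) + 1)) * (4 * x + 2) := by
        gcongr
        · exact card_nearColumns_le ξ hy hε.le
        · linarith [card_intsNear_le 0 (by linarith : 0 ≤ 2 * x + 1 / 2)]
    _ ≤ _ := by
        have hbound := card_nearColumns_bound_le hy hε.le hε₁ hm (Complex.im_le_norm ξ) hξ.2.2
        exact mul_le_mul hbound (by linarith [hξ.2.2]) (by linarith)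
          (le_trans (by positivity) hbound)
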